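/- arXiv:math/0308166 — 3 statements merged into one kernel-verified Lean document; each statement's English description precedes it below -/
import Mathlib

section
/- A function f : ℝmax^n → ℝ̄ is max-plus convex and lower semi-continuous if and only if f is the pointwise supremum of some (possibly empty) family of residuated differences of max-plus affine functions, i.e., if and only if there is a family of quadruples (w'_ℓ, d'_ℓ, w''_ℓ, d''_ℓ) with w'_ℓ, w''_ℓ ∈ ℝmax^n and d'_ℓ, d''_ℓ ∈ ℝmax such that f(x) = sup over ℓ of (max(⟨w'_ℓ, x⟩, d'_ℓ) ⊖ max(⟨w''_ℓ, x⟩, d''_ℓ)) for all x ∈ ℝmax^n. -/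
noncomputable section

/-- `ℝmax = ℝ ∪ {-∞}`, the max-plus semifield. -/
abbrev Rmax := WithBot ℝ

/-- the order topology on `ℝmax`. -/
noncomputable instance : TopologicalSpace Rmax := Preorder.topology Rmax
instance : OrderTopology Rmax := ⟨rfl⟩

/-- the embedding of `ℝmax = ℝ ∪ {-∞}` into `ℝ̄ = [-∞,+∞]`. -/
def Rmax.toE : Rmax → EReal := WithBot.recBotCoe ⊥ (fun r : ℝ => (r : EReal))

/-- max-plus scalar product `⟨w,x⟩ = max_i (w_i + x_i)` on `ℝmax^n`. -/
def mdot {n : ℕ} (w x : Fin n → Rmax) : Rmax := Finset.univ.sup fun i => w i + x i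

/-- residuated difference: `a ⊖ b = a` if `a > b`, and `-∞` otherwise. -/
def rdiff (a b : Rmax) : Rmax := if b < a then a else ⊥

/-- max-plus convexity of a subset of `ℝmax^n`. -/
def MPConvex {n : ℕ} (C : Set (Fin n → Rmax)) : Prop :=
  ∀ x ∈ C, ∀ y ∈ C, ∀ α β : Rmax, max α β = 0 →
    (fun i => max (α + x i) (β + y i)) ∈ C

/-- max-plus convexity of a subset of `ℝmax^n × ℝmax ≅ ℝmax^{n+1}`. -/
def MPConvexP {n : ℕ} (C : Set ((Fin n → Rmax) × Rmax)) : Prop :=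
  ∀ p ∈ C, ∀ q ∈ C, ∀ α β : Rmax, max α β = 0 →
    ((fun i => max (α + p.1 i) (β + q.1 i)), max (α + p.2) (β + q.2)) ∈ C

/-- the epigraph of a function `f : ℝmax^n → ℝ̄`. -/
def Epi {n : ℕ} (f : (Fin n → Rmax) → EReal) : Set ((Fin n → Rmax) × Rmax) :=
  {p | f p.1 ≤ Rmax.toE p.2}

/-- a function `f : ℝmax^n → ℝ̄` is max-plus convex if its epigraph is
max-plus convex. -/
def MPConvexFun {n : ℕ} (f : (Fin n → Rmax) → EReal) : Prop :=
  MPConvexP (Epi f)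

/-- a function `f : ℝmax^n → ℝ̄` is lower semi-continuous if all its lower
level sets are closed. -/
def LSC {n : ℕ} (f : (Fin n → Rmax) → EReal) : Prop :=
  ∀ t : EReal, IsClosed {x | f x ≤ t}

/-! The epigraph of a lower semicontinuous max-plus convex `f` is closed and max-plus convex, so
each point `(x₀, t)` below the graph is separated from it by max-plus affine functions of `(x, s)`.
Evaluated at `s = f x` and shifted by a real constant, the separating inequality becomes a
residuated difference `A ⊖ B ≤ f` of max-plus affine functions of `x` exceeding `t` at `x₀`, so `f`
is the supremum of such minorants. Conversely each `A ⊖ B` is max-plus convex and lower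
semicontinuous, and both properties pass to pointwise suprema. -/

namespace Rmax

@[simp] lemma toE_bot : toE ⊥ = ⊥ := rfl

@[simp] lemma toE_coe (r : ℝ) : toE r = r := rfl

lemma toE_strictMono : StrictMono toE := by
  intro a b h
  induction a using WithBot.recBotCoe <;> induction b using WithBot.recBotCoe <;>
    simp_all [EReal.bot_lt_coe]

lemma toE_le_toE {a b : Rmax} : toE a ≤ toE b ↔ a ≤ b := toE_strictMono.le_iff_le

lemma toE_lt_toE {a b : Rmax} : toE a < toE b ↔ a < b := toE_strictMono.lt_iff_lt

lemma exists_toE_eq {x : EReal} (hx : x ≠ ⊤) : ∃ a, toE a = x := by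
  induction x with
  | bot => exact ⟨⊥, rfl⟩
  | coe r => exact ⟨r, rfl⟩
  | top => exact absurd rfl hx

lemma continuous_toE : Continuous toE :=
  toE_strictMono.monotone.continuous_of_denseRange <| dense_iff_exists_between.2 fun _ _ h => by
    obtain ⟨r, hr⟩ := EReal.lt_iff_exists_real_btwn.1 h
    exact ⟨r, ⟨r, rfl⟩, hr⟩

lemma coe_neg_add_le_iff {r : ℝ} {a b : Rmax} : ((-r : ℝ) : Rmax) + a ≤ b ↔ a ≤ r + b := by
  induction a using WithBot.recBotCoe <;> induction b using WithBot.recBotCoe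
  all_goals try simp
  norm_cast
  constructor <;> intro <;> linarith

lemma coe_neg_add_lt_iff {r : ℝ} {a b : Rmax} : ((-r : ℝ) : Rmax) + a < b ↔ a < r + b := by
  induction a using WithBot.recBotCoe <;> induction b using WithBot.recBotCoe
  all_goals try simp
  norm_cast
  constructor <;> intro <;> linarith

lemma exists_coe_gt (a : Rmax) : ∃ r : ℝ, a < r := by
  induction a using WithBot.recBotCoe with
  | bot => exact ⟨0, WithBot.bot_lt_coe 0⟩
  | coe r => exact ⟨r + 1, WithBot.coe_lt_coe.2 (lt_add_one r)⟩

lemma le_of_forall_add_le_max_add {u₀ v₀ b s₁ : Rmax}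
    (h : ∀ r : ℝ, s₁ ≤ r → u₀ + r ≤ max b (v₀ + r)) : u₀ ≤ v₀ := by
  by_contra! hvu
  obtain ⟨a, rfl⟩ := WithBot.ne_bot_iff_exists.1 (ne_bot_of_gt hvu)
  obtain ⟨r₁, hr₁⟩ := exists_coe_gt s₁
  obtain ⟨r₂, hr₂⟩ := exists_coe_gt b
  have hb : b < (a : Rmax) + (max r₁ (r₂ - a) : ℝ) :=
    hr₂.trans_le (by norm_cast; linarith [le_max_right r₁ (r₂ - a)])
  have hv : v₀ + (max r₁ (r₂ - a) : ℝ) < (a : Rmax) + (max r₁ (r₂ - a) : ℝ) :=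
    WithBot.add_lt_add_right WithBot.coe_ne_bot hvu
  exact (max_lt hb hv).not_ge (h _ (hr₁.le.trans (by exact_mod_cast le_max_left _ _)))

lemma exists_coe_add_le_zero_lt_coe_add {v₀ t a : Rmax} (h : v₀ + t < a) :
    ∃ k : ℝ, (k : Rmax) + v₀ ≤ 0 ∧ t < k + a := by
  induction v₀ using WithBot.recBotCoe with
  | bot =>
    obtain ⟨α, rfl⟩ := WithBot.ne_bot_iff_exists.1 (ne_bot_of_gt h)
    obtain ⟨r, hr⟩ := exists_coe_gt t
    exact ⟨r - α, by simp, by rwa [← WithBot.coe_add, sub_add_cancel]⟩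
  | coe r =>
    refine ⟨-r, by simp [← WithBot.coe_add], ?_⟩
    have := WithBot.add_lt_add_left (WithBot.coe_ne_bot (a := -r)) h
    rwa [← add_assoc, ← WithBot.coe_add, neg_add_cancel, WithBot.coe_zero, zero_add] at this

lemma coe_add_coe_neg_add (r : ℝ) (b : Rmax) : (r : Rmax) + (((-r : ℝ) : Rmax) + b) = b := by
  rw [← add_assoc, ← WithBot.coe_add, add_neg_cancel, WithBot.coe_zero, zero_add]

lemma continuous_const_add (a : Rmax) : Continuous (a + ·) := by
  induction a using WithBot.recBotCoe with
  | bot => simpa using continuous_const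
  | coe r =>
    refine Monotone.continuous_of_surjective (fun _ _ h => by gcongr) fun b => ?_
    exact ⟨_, coe_add_coe_neg_add r b⟩

end Rmax

section MaxPlusAffine

variable {n : ℕ}

lemma mdot_le_iff {w x : Fin n → Rmax} {b : Rmax} : mdot w x ≤ b ↔ ∀ i, w i + x i ≤ b := by
  simp [mdot]

lemma le_mdot (w x : Fin n → Rmax) (i : Fin n) : w i + x i ≤ mdot w x :=
  Finset.le_sup (f := fun i => w i + x i) (Finset.mem_univ i)

lemma mdot_lt_iff {w x : Fin n → Rmax} {b : Rmax} (hb : ⊥ < b) :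
    mdot w x < b ↔ ∀ i, w i + x i < b := by
  simp [mdot, Finset.sup_lt_iff hb]

@[simp] lemma mdot_bot_left (x : Fin n → Rmax) : mdot (fun _ => ⊥) x = ⊥ := by
  simp [mdot]

lemma mdot_ite_bot (k : Fin n) (a : Rmax) (x : Fin n → Rmax) :
    mdot (fun j => if j = k then a else ⊥) x = a + x k := by
  refine le_antisymm (mdot_le_iff.2 fun j => ?_)
    (by simpa using le_mdot (fun j => if j = k then a else ⊥) x k)
  split_ifs with h <;> simp [h]

lemma const_add_mdot (a : Rmax) (w x : Fin n → Rmax) :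
    a + mdot w x = mdot (fun i => a + w i) x := by
  simp only [mdot, add_assoc]
  exact Finset.apply_sup_eq_sup_comp_of_linearOrder (a + ·) (fun _ _ h => add_le_add_right h a)
    (by simp)

lemma mdot_maxComb (w x y : Fin n → Rmax) (α β : Rmax) :
    mdot w (fun i => max (α + x i) (β + y i)) = max (α + mdot w x) (β + mdot w y) := by
  rw [const_add_mdot, const_add_mdot, mdot, mdot, mdot, ← Finset.sup_sup]
  refine Finset.sup_congr rfl fun i _ => ?_
  simp only [Pi.sup_apply, ← max_add_add_left, add_assoc, add_left_comm (w i)]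

lemma mdot_snoc (u : Fin (n + 1) → Rmax) (x : Fin n → Rmax) (s : Rmax) :
    mdot u (Fin.snoc x s) = max (mdot (Fin.init u) x) (u (Fin.last n) + s) := by
  simp [mdot, Fin.univ_castSuccEmb, Finset.sup_map, Fin.init, max_comm, Function.comp_def]

lemma continuous_mdot (w : Fin n → Rmax) : Continuous (mdot w) :=
  Continuous.finset_sup_apply fun i _ => (Rmax.continuous_const_add (w i)).comp (continuous_apply i)

def mpAffine (w : Fin n → Rmax) (d : Rmax) (x : Fin n → Rmax) : Rmax := max (mdot w x) d

lemma mpAffine_maxComb (w : Fin n → Rmax) (d : Rmax) (x y : Fin n → Rmax) {α β : Rmax}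
    (hαβ : max α β = 0) :
    mpAffine w d (fun i => max (α + x i) (β + y i)) =
      max (α + mpAffine w d x) (β + mpAffine w d y) := by
  have hd : max (α + d) (β + d) = d := by rw [← max_add, hαβ, zero_add]
  rw [mpAffine, mdot_maxComb, mpAffine, mpAffine, ← max_add_add_left, ← max_add_add_left,
    max_max_max_comm, hd]

lemma const_add_mpAffine (a : Rmax) (w : Fin n → Rmax) (d : Rmax) (x : Fin n → Rmax) :
    a + mpAffine w d x = mpAffine (fun i => a + w i) (a + d) x := by
  rw [mpAffine, mpAffine, ← max_add_add_left, const_add_mdot]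

lemma continuous_mpAffine (w : Fin n → Rmax) (d : Rmax) : Continuous (mpAffine w d) :=
  (continuous_mdot w).max continuous_const

end MaxPlusAffine

section Rdiff

lemma rdiff_of_lt {a b : Rmax} (h : b < a) : rdiff a b = a := if_pos h

lemma rdiff_of_le {a b : Rmax} (h : a ≤ b) : rdiff a b = ⊥ := if_neg h.not_gt

lemma rdiff_le_iff {a b t : Rmax} : rdiff a b ≤ t ↔ (b < a → a ≤ t) := by
  unfold rdiff
  split_ifs <;> simp_all

lemma rdiff_max_add_le {a₁ b₁ a₂ b₂ t₁ t₂ : Rmax} (α β : Rmax) (h₁ : rdiff a₁ b₁ ≤ t₁)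
    (h₂ : rdiff a₂ b₂ ≤ t₂) :
    rdiff (max (α + a₁) (β + a₂)) (max (α + b₁) (β + b₂)) ≤ max (α + t₁) (β + t₂) := by
  rw [rdiff_le_iff] at *
  intro h
  rcases le_total (β + a₂) (α + a₁) with ha | ha
  · rw [max_eq_left ha] at h ⊢
    have hb : α + b₁ < α + a₁ := (le_max_left _ _).trans_lt h
    exact le_max_of_le_left (add_le_add_right (h₁ (lt_of_add_lt_add_left hb)) α)
  · rw [max_eq_right ha] at h ⊢
    have hb : β + b₂ < β + a₂ := (le_max_right _ _).trans_lt h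
    exact le_max_of_le_right (add_le_add_right (h₂ (lt_of_add_lt_add_left hb)) β)

lemma isClosed_setOf_toE_rdiff_le {X : Type*} [TopologicalSpace X] {A B : X → Rmax}
    (hA : Continuous A) (hB : Continuous B) (t : EReal) :
    IsClosed {x | Rmax.toE (rdiff (A x) (B x)) ≤ t} := by
  have : {x | Rmax.toE (rdiff (A x) (B x)) ≤ t} =
      {x | A x ≤ B x} ∪ {x | Rmax.toE (A x) ≤ t} := by
    ext x
    by_cases h : A x ≤ B x
    · simp [h, rdiff_of_le h]
    · simp [h, rdiff_of_lt (not_le.1 h)]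
  rw [this]
  exact (isClosed_le hA hB).union (isClosed_le (Rmax.continuous_toE.comp hA) continuous_const)

end Rdiff

section SupOfRdiffAffine

variable {n : ℕ}

lemma mpConvexFun_toE_rdiff_mpAffine (w' : Fin n → Rmax) (d' : Rmax) (w'' : Fin n → Rmax)
    (d'' : Rmax) :
    MPConvexFun fun x => Rmax.toE (rdiff (mpAffine w' d' x) (mpAffine w'' d'' x)) := by
  intro p hp q hq α β hαβ
  simp only [Epi, Set.mem_ofPred_eq, Rmax.toE_le_toE, mpAffine_maxComb _ _ _ _ hαβ] at *
  exact rdiff_max_add_le α β hp hq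

lemma lsc_toE_rdiff_mpAffine (w' : Fin n → Rmax) (d' : Rmax) (w'' : Fin n → Rmax) (d'' : Rmax) :
    LSC fun x => Rmax.toE (rdiff (mpAffine w' d' x) (mpAffine w'' d'' x)) :=
  isClosed_setOf_toE_rdiff_le (continuous_mpAffine w' d') (continuous_mpAffine w'' d'')

lemma MPConvexFun.iSup {ι : Sort*} {F : ι → (Fin n → Rmax) → EReal}
    (hF : ∀ l, MPConvexFun (F l)) : MPConvexFun fun x => ⨆ l, F l x := by
  intro p hp q hq α β hαβ
  simp only [Epi, Set.mem_ofPred_eq, iSup_le_iff] at *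
  exact fun l => hF l p (hp l) q (hq l) α β hαβ

lemma LSC.iSup {ι : Sort*} {F : ι → (Fin n → Rmax) → EReal} (hF : ∀ l, LSC (F l)) :
    LSC fun x => ⨆ l, F l x := by
  intro t
  simp only [iSup_le_iff, Set.ofPred_forall]
  exact isClosed_iInter fun l => hF l t

end SupOfRdiffAffine

section Separation

open Topology

variable {m : ℕ}

lemma exists_Icc_subset_of_mem_nhds_pi {ι α : Type*} [LinearOrder α] [TopologicalSpace α]
    [OrderTopology α] [DenselyOrdered α] [NoMaxOrder α] {y : ι → α} {s : Set (ι → α)}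
    (hs : s ∈ 𝓝 y) : ∃ u, (∀ i, y i < u i) ∧ Set.Icc y u ⊆ s := by
  rw [nhds_pi, Filter.mem_pi'] at hs
  obtain ⟨I, t, ht, hts⟩ := hs
  have : ∀ i, ∃ u, y i < u ∧ Set.Icc (y i) u ⊆ t i := fun i => by
    obtain ⟨l, hyl, hlt⟩ := exists_Ico_subset_of_mem_nhds (ht i) (exists_gt (y i))
    obtain ⟨u, hyu, hul⟩ := exists_between hyl
    exact ⟨u, hyu, (Set.Icc_subset_Ico_right hul).trans hlt⟩
  choose u hyu hut using this
  exact ⟨u, hyu, fun z hz => hts fun i _ => hut i ⟨hz.1 i, hz.2 i⟩⟩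

lemma SupClosed.exists_isGreatest_of_isCompact {ι α : Type*} [Fintype ι] [LinearOrder α]
    [TopologicalSpace α] [ClosedIciTopology α] {D : Set (ι → α)} (hsup : SupClosed D)
    (hD : IsCompact D) (hne : D.Nonempty) : ∃ ν, IsGreatest D ν := by
  cases isEmpty_or_nonempty ι
  · obtain ⟨z, hz⟩ := hne
    exact ⟨z, hz, fun w _ => (Subsingleton.elim w z).le⟩
  have : ∀ k, ∃ z ∈ D, IsMaxOn (· k) D z := fun k =>
    hD.exists_isMaxOn hne (continuous_apply k).continuousOn
  choose z hzD hzmax using this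
  refine ⟨Finset.univ.sup' Finset.univ_nonempty z,
    hsup.finsetSup'_mem _ fun k _ => hzD k, fun w hw k => ?_⟩
  exact (isMaxOn_iff.1 (hzmax k) w hw).trans (Finset.le_sup' z (Finset.mem_univ k) k)

lemma MPConvex.supClosed {C : Set (Fin m → Rmax)} (hC : MPConvex C) : SupClosed C :=
  fun x hx y hy => by simpa [Pi.sup_def] using hC x hx y hy 0 0 (max_self 0)

lemma mdot_neg_le_coe_iff (p : Fin m → ℝ) (z : Fin m → Rmax) (σ : ℝ) :
    mdot (fun j => ((-p j : ℝ) : Rmax)) z ≤ σ ↔ ∀ j, z j ≤ p j + σ := by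
  simp only [mdot_le_iff, Rmax.coe_neg_add_le_iff]

lemma mdot_neg_lt_zero {p : Fin m → ℝ} {y : Fin m → Rmax} (hy : ∀ j, y j < p j) :
    mdot (fun j => ((-p j : ℝ) : Rmax)) y < 0 := by
  rw [mdot_lt_iff (by simp)]
  intro j
  simpa [Rmax.coe_neg_add_lt_iff] using hy j

/-- The greatest point `ν` of `C` below `p` controls the `k`-th coordinate on all of `C`: shifting
`z ∈ C` down by `σ = max (⟨-p, z⟩, 0)` brings it below `p`, and its max-plus combination with `ν`
then stays below `ν`. -/
lemma coe_neg_add_le_max_mdot_neg {C : Set (Fin m → Rmax)} (hC : MPConvex C) {p : Fin m → ℝ}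
    {ν : Fin m → Rmax} (hν : IsGreatest (C ∩ Set.Iic fun j => (p j : Rmax)) ν) {k : Fin m}
    {a : ℝ} (ha : ν k < a) {z : Fin m → Rmax} (hz : z ∈ C) :
    ((-a : ℝ) : Rmax) + z k ≤ max (mdot (fun j => ((-p j : ℝ) : Rmax)) z) 0 := by
  obtain ⟨σ, hσ⟩ := WithBot.ne_bot_iff_exists.1 (ne_bot_of_le_ne_bot WithBot.coe_ne_bot
    (le_max_right (mdot (fun j => ((-p j : ℝ) : Rmax)) z) 0))
  have hσ0 : 0 ≤ σ := by exact_mod_cast hσ ▸ le_max_right _ _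
  have hzσ : ∀ j, z j ≤ p j + σ := (mdot_neg_le_coe_iff p z σ).1 (hσ ▸ le_max_left _ _)
  have hcomb := hC ν hν.1.1 z hz 0 ((-σ : ℝ) : Rmax)
    (max_eq_left (by exact_mod_cast neg_nonpos.2 hσ0))
  have hle : ((-σ : ℝ) : Rmax) + z k ≤ ν k :=
    (le_max_right _ _).trans (hν.2 ⟨hcomb, fun j => max_le (by simpa using hν.1.2 j)
      (Rmax.coe_neg_add_le_iff.2 ((hzσ j).trans_eq (add_comm _ _)))⟩ k)
  rw [← hσ, Rmax.coe_neg_add_le_iff, add_comm]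
  exact (Rmax.coe_neg_add_lt_iff.1 (hle.trans_lt ha)).le

/-- Take a box `[y, p]` missing `C`. If no point of `C` lies below `p`, then `⟨-p, ·⟩ > 0` on `C`
separates; otherwise the greatest point `ν` of `C` below `p` has `ν k < a < y k` for some `k`, and
`z ↦ -a + z k` separates. -/
theorem MPConvex.exists_mpAffine_separation {C : Set (Fin m → Rmax)} (hconv : MPConvex C)
    (hC : IsClosed C) {y : Fin m → Rmax} (hy : y ∉ C) :
    ∃ (u : Fin m → Rmax) (c : Rmax) (v : Fin m → Rmax) (d : Rmax),
      (∀ z ∈ C, mpAffine u c z ≤ mpAffine v d z) ∧ mpAffine v d y < mpAffine u c y := by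
  obtain ⟨p', hyp', hbox⟩ := exists_Icc_subset_of_mem_nhds_pi (hC.isOpen_compl.mem_nhds hy)
  choose p hp using fun j => WithBot.ne_bot_iff_exists.1 (ne_bot_of_gt (hyp' j))
  obtain rfl : (fun j => (p j : Rmax)) = p' := funext hp
  have hvy := mdot_neg_lt_zero hyp'
  rcases (C ∩ Set.Iic fun j => (p j : Rmax)).eq_empty_or_nonempty with hD | hD
  · refine ⟨fun _ => ⊥, 0, fun j => ((-p j : ℝ) : Rmax), ⊥, fun z hz => ?_, ?_⟩
    · have hzp : ¬ z ≤ fun j => (p j : Rmax) := fun h => hD.subset ⟨hz, h⟩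
      have := (mdot_neg_le_coe_iff p z 0).not.2 (by simpa [Pi.le_def] using hzp)
      simp only [mpAffine, mdot_bot_left, WithBot.coe_zero] at this ⊢
      simpa using (not_le.1 this).le
    · simpa [mpAffine] using hvy
  have hIic : SupClosed (Set.Iic fun j => (p j : Rmax)) :=
    fun _ hx _ hy => Set.mem_Iic.2 (sup_le hx hy)
  have hIicCpt : IsCompact (Set.Iic fun j => (p j : Rmax)) := by
    simpa using isCompact_Icc (a := ⊥) (b := fun j => (p j : Rmax))
  obtain ⟨ν, hν⟩ :=
    (hconv.supClosed.inter hIic).exists_isGreatest_of_isCompact (hIicCpt.inter_left hC) hD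
  obtain ⟨k, hk⟩ : ∃ k, ν k < y k := by
    by_contra! h
    exact hbox ⟨h, hν.1.2⟩ hν.1.1
  obtain ⟨a', hνa, hay⟩ := exists_between hk
  obtain ⟨a, rfl⟩ := WithBot.ne_bot_iff_exists.1 (ne_bot_of_gt hνa)
  refine ⟨fun j => if j = k then ((-a : ℝ) : Rmax) else ⊥, ⊥, fun j => ((-p j : ℝ) : Rmax), 0,
    fun z hz => ?_, ?_⟩
  · simpa [mpAffine, mdot_ite_bot] using coe_neg_add_le_max_mdot_neg hconv hν hνa hz
  · simp only [mpAffine, mdot_ite_bot, max_eq_right hvy.le, max_eq_left bot_le]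
    exact lt_of_not_ge fun h => hay.not_ge (by simpa using Rmax.coe_neg_add_le_iff.1 h)

end Separation

section Epigraph

variable {n : ℕ} {f : (Fin n → Rmax) → EReal}

lemma LSC.isClosed_epi (hf : LSC f) : IsClosed (Epi f) :=
  (lowerSemicontinuous_iff_isClosed_preimage.2 hf).isClosed_epigraph.preimage
    (continuous_fst.prodMk (Rmax.continuous_toE.comp continuous_snd))

lemma mpAffine_snoc (u : Fin (n + 1) → Rmax) (c : Rmax) (x : Fin n → Rmax) (s : Rmax) :
    mpAffine u c (Fin.snoc x s) = max (mpAffine (Fin.init u) c x) (u (Fin.last n) + s) := by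
  rw [mpAffine, mpAffine, mdot_snoc, max_right_comm]

lemma exists_epi_separation (hconv : MPConvexFun f) (hlsc : LSC f) {x₀ : Fin n → Rmax}
    {t : Rmax} (ht : ¬ f x₀ ≤ Rmax.toE t) :
    ∃ (u : Fin n → Rmax) (c u₀ : Rmax) (v : Fin n → Rmax) (d v₀ : Rmax),
      (∀ x s, f x ≤ Rmax.toE s → max (mpAffine u c x) (u₀ + s) ≤ max (mpAffine v d x) (v₀ + s)) ∧
      max (mpAffine v d x₀) (v₀ + t) < max (mpAffine u c x₀) (u₀ + t) := by
  let C : Set (Fin (n + 1) → Rmax) := (fun z => (Fin.init z, z (Fin.last n))) ⁻¹' Epi f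
  have hcont : Continuous fun z : Fin (n + 1) → Rmax => (Fin.init z, z (Fin.last n)) :=
    (continuous_pi fun i => continuous_apply (Fin.castSucc i)).prodMk
      (continuous_apply (Fin.last n))
  have hC : IsClosed C := hlsc.isClosed_epi.preimage hcont
  have hCconv : MPConvex C := fun z hz w hw α β hαβ => hconv _ hz _ hw α β hαβ
  have hyC : Fin.snoc x₀ t ∉ C := by simpa [C, Epi] using ht
  obtain ⟨u, c, v, d, hsep, hy⟩ := hCconv.exists_mpAffine_separation hC hyC
  refine ⟨Fin.init u, c, u (Fin.last n), Fin.init v, d, v (Fin.last n), fun x s hxs => ?_, ?_⟩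
  · simpa only [mpAffine_snoc] using hsep (Fin.snoc x s) (by simpa [C, Epi] using hxs)
  · simpa only [mpAffine_snoc] using hy

end Epigraph

section Minorants

variable {n : ℕ} {f : (Fin n → Rmax) → EReal}

/-- The epigraph contains `(x₁, s)` for all large `s`, which forces `u₀ ≤ v₀` for the coefficients
of `s`; the strict inequality at `(x₀, t)` is then carried by `mpAffine u c` alone. -/
lemma exists_epi_separation_of_ne_top (hconv : MPConvexFun f) (hlsc : LSC f)
    {x₁ : Fin n → Rmax} (hx₁ : f x₁ ≠ ⊤) {x₀ : Fin n → Rmax} {t : Rmax}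
    (ht : ¬ f x₀ ≤ Rmax.toE t) :
    ∃ (u : Fin n → Rmax) (c : Rmax) (v : Fin n → Rmax) (d v₀ : Rmax),
      (∀ x s, f x ≤ Rmax.toE s → mpAffine u c x ≤ max (mpAffine v d x) (v₀ + s)) ∧
      max (mpAffine v d x₀) (v₀ + t) < mpAffine u c x₀ := by
  obtain ⟨u, c, u₀, v, d, v₀, hsep, hx₀⟩ := exists_epi_separation hconv hlsc ht
  obtain ⟨s₁, hs₁⟩ := Rmax.exists_toE_eq hx₁
  have huv : u₀ ≤ v₀ := Rmax.le_of_forall_add_le_max_add fun r hr =>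
    (le_max_right _ _).trans (hsep x₁ r (hs₁ ▸ Rmax.toE_le_toE.2 hr))
  refine ⟨u, c, v, d, v₀, fun x s hxs => (le_max_left _ _).trans (hsep x s hxs), ?_⟩
  rcases le_total (u₀ + t) (mpAffine u c x₀) with h | h
  · rwa [max_eq_left h] at hx₀
  · rw [max_eq_right h] at hx₀
    exact absurd (hx₀.trans_le (add_le_add_left huv t)) (le_max_right _ _).not_gt

lemma toE_rdiff_const_add_le {A B : (Fin n → Rmax) → Rmax} {v₀ : Rmax} {k : ℝ}
    (hk : (k : Rmax) + v₀ ≤ 0) (hsep : ∀ x s, f x ≤ Rmax.toE s → A x ≤ max (B x) (v₀ + s))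
    (x : Fin n → Rmax) : Rmax.toE (rdiff (k + A x) (k + B x)) ≤ f x := by
  obtain hfx | hfx := eq_or_ne (f x) ⊤
  · simp [hfx]
  obtain ⟨s, hs⟩ := Rmax.exists_toE_eq hfx
  rw [← hs, Rmax.toE_le_toE, rdiff_le_iff]
  intro hlt
  have hAs : A x ≤ v₀ + s :=
    (le_max_iff.1 (hsep x s hs.ge)).resolve_left (lt_of_add_lt_add_left hlt).not_ge
  calc (k : Rmax) + A x ≤ k + (v₀ + s) := add_le_add_right hAs _
    _ = (k + v₀) + s := (add_assoc _ _ _).symm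
    _ ≤ 0 + s := add_le_add_left hk s
    _ = s := zero_add s

lemma exists_rdiff_mpAffine_minorant (hconv : MPConvexFun f) (hlsc : LSC f)
    {x₀ : Fin n → Rmax} {e : EReal} (he : e < f x₀) :
    ∃ (w' : Fin n → Rmax) (d' : Rmax) (w'' : Fin n → Rmax) (d'' : Rmax),
      (∀ x, Rmax.toE (rdiff (mpAffine w' d' x) (mpAffine w'' d'' x)) ≤ f x) ∧
      e < Rmax.toE (rdiff (mpAffine w' d' x₀) (mpAffine w'' d'' x₀)) := by
  obtain ⟨t, rfl⟩ := Rmax.exists_toE_eq he.ne_top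
  by_cases htop : ∀ x, f x = ⊤
  · obtain ⟨r, hr⟩ := Rmax.exists_coe_gt t
    refine ⟨fun _ => ⊥, r, fun _ => ⊥, ⊥, fun x => by simp [htop x], ?_⟩
    simpa [mpAffine, rdiff_of_lt (WithBot.bot_lt_coe r)] using Rmax.toE_lt_toE.2 hr
  obtain ⟨x₁, hx₁⟩ := not_forall.1 htop
  obtain ⟨u, c, v, d, v₀, hsep, hx₀⟩ :=
    exists_epi_separation_of_ne_top hconv hlsc hx₁ he.not_ge
  obtain ⟨k, hk, hkt⟩ := Rmax.exists_coe_add_le_zero_lt_coe_add ((le_max_right _ _).trans_lt hx₀)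
  refine ⟨fun i => k + u i, k + c, fun i => k + v i, k + d, fun x => ?_, ?_⟩
  · simpa only [← const_add_mpAffine] using toE_rdiff_const_add_le hk hsep x
  · rw [← const_add_mpAffine, ← const_add_mpAffine, Rmax.toE_lt_toE,
      rdiff_of_lt (WithBot.add_lt_add_left WithBot.coe_ne_bot ((le_max_left _ _).trans_lt hx₀))]
    exact hkt

end Minorants

/-- **A function `f : ℝmax^n → ℝ̄` is max-plus convex and lower semi-continuous
iff it is a pointwise sup of residuated differences of max-plus affine
functions.** -/
theorem stmt1 {n : ℕ} (f : (Fin n → Rmax) → EReal) :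
    (MPConvexFun f ∧ LSC f) ↔
    ∃ (L : Type) (w' w'' : L → Fin n → Rmax) (d' d'' : L → Rmax),
      ∀ x, f x = ⨆ l, Rmax.toE
        (rdiff (max (mdot (w' l) x) (d' l)) (max (mdot (w'' l) x) (d'' l))) := by
  constructor
  · rintro ⟨hconv, hlsc⟩
    let L := {g : (Fin n → Rmax) × Rmax × (Fin n → Rmax) × Rmax //
      ∀ x, Rmax.toE (rdiff (mpAffine g.1 g.2.1 x) (mpAffine g.2.2.1 g.2.2.2 x)) ≤ f x}
    refine ⟨L, fun g => g.1.1, fun g => g.1.2.2.1, fun g => g.1.2.1, fun g => g.1.2.2.2,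
      fun x => le_antisymm (le_of_forall_lt fun e he => ?_) (iSup_le fun g => g.2 x)⟩
    obtain ⟨w', d', w'', d'', hmin, hlt⟩ := exists_rdiff_mpAffine_minorant hconv hlsc he
    exact hlt.trans_le (le_iSup_of_le (⟨(w', d', w'', d''), hmin⟩ : L) le_rfl)
  · rintro ⟨L, w', w'', d', d'', hf⟩
    rw [funext hf]
    exact ⟨MPConvexFun.iSup fun l => mpConvexFun_toE_rdiff_mpAffine (w' l) (d' l) (w'' l) (d'' l),
      LSC.iSup fun l => lsc_toE_rdiff_mpAffine (w' l) (d' l) (w'' l) (d'' l)⟩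

end
end

section
/- Let ι be an index set, let C ⊆ ℝmax^ι be max-plus convex and stable under directed sups and filtered infs, and let y ∈ ℝmax^ι with y ∉ C. Assume the Archimedean condition: for every v ∈ C there exists a real number λ such that v + λ ≤ y componentwise. Then there exist w', w'' ∈ ℝmax^ι and d', d'' ∈ ℝmax such that max(⟨w', x⟩, d') = max(⟨w'', x⟩, d'') for every x ∈ C, while max(⟨w', y⟩, d') ≠ max(⟨w'', y⟩, d''), where ⟨w, x⟩ := sup over i ∈ ι of (w_i + x_i), a supremum taken in [-∞, +∞]. -/
noncomputable section

/-- max-plus convexity of a subset of `ℝmax^ι`. -/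
def MPConvexI {ι : Type} (C : Set (ι → Rmax)) : Prop :=
  ∀ x ∈ C, ∀ y ∈ C, ∀ α β : Rmax, max α β = 0 →
    (fun i => max (α + x i) (β + y i)) ∈ C

/-- a max-plus subsemimodule of `ℝmax^ι`: contains the bottom vector, stable
under componentwise max and under addition of scalars. -/
def MPSubmoduleI {ι : Type} (V : Set (ι → Rmax)) : Prop :=
  (fun _ => ⊥) ∈ V ∧ (∀ x ∈ V, ∀ y ∈ V, x ⊔ y ∈ V) ∧
    (∀ x ∈ V, ∀ lam : Rmax, (fun i => x i + lam) ∈ V)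

/-- stability under sups of bounded directed subsets. -/
def DirStable {ι : Type} (C : Set (ι → Rmax)) : Prop :=
  ∀ D ⊆ C, D.Nonempty → DirectedOn (· ≤ ·) D → BddAbove D → sSup D ∈ C

/-- stability under infs of filtered subsets. -/
def FiltStable {ι : Type} (C : Set (ι → Rmax)) : Prop :=
  ∀ F ⊆ C, F.Nonempty → DirectedOn (· ≥ ·) F → sInf F ∈ C

/-!
Homogenize: `(z, μ) := (sup scaledBelow C y, sup scalings C y)` is the max-plus projection of
`(y, 0)` onto the semimodule of `ℝmax^ι × ℝ` generated by `C × {0}`. The residual forms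
`x ↦ max (⟨-y, x⟩, 0)` and `x ↦ max (⟨-z, x⟩, -μ)` agree on `C`: by the Archimedean condition,
at `x ∈ C` they are the least `c` with `(x - c, -c) ≤ (y, 0)`, resp. `(x - c, -c) ≤ (z, μ)`, and
these two conditions are equivalent. If they also agreed at `y`, then `μ = 0` and `y ≤ z`. The suprema of
`{v ∈ C | v ≤ y + ε}` lie in `C` (these sets are directed by convexity), dominate `z` (convexity
merges a scaled point of `C` with one scaled by almost `0`), and decrease to `y` as `ε ↓ 0`;
stability under filtered infima then puts `y` in `C`.

When `C` is empty, or `y` is finite at a coordinate where all of `C` is `-∞`, a form that is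
`-∞` on `C` but not at `y` separates instead.
-/

namespace Rmax

@[simp] lemma toE_eq_bot {a : Rmax} : toE a = ⊥ ↔ a = ⊥ := by
  induction a using WithBot.recBotCoe <;> simp

lemma add_coe_le_iff {a b : Rmax} {l : ℝ} : a + l ≤ b ↔ a ≤ b + ↑(-l) := by
  induction a using WithBot.recBotCoe with
  | bot => simp
  | coe s =>
    induction b using WithBot.recBotCoe with
    | bot => simp
    | coe r =>
      norm_cast
      constructor <;> intro <;> linarith

lemma le_of_forall_pos_le_add_coe {a b : Rmax} (h : ∀ ε : ℝ, 0 < ε → a ≤ b + ε) : a ≤ b := by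
  induction b using WithBot.recBotCoe with
  | bot => simpa using h 1 one_pos
  | coe r =>
    induction a using WithBot.recBotCoe with
    | bot => exact bot_le
    | coe s =>
      norm_cast at h ⊢
      exact le_of_forall_pos_le_add h

/-- Negation on `ℝ`, extended by `-∞ ↦ -∞` (there is no `+∞` in `ℝmax`): the residuation
`toE (neg a + x) ≤ c ↔ x - c ≤ a` then needs `x = -∞` wherever `a = -∞`. -/
def neg : Rmax → Rmax := WithBot.map Neg.neg

lemma toE_neg_add_le_coe_iff {a x : Rmax} {c : ℝ} (h : a = ⊥ → x = ⊥) :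
    toE (neg a + x) ≤ c ↔ x + ↑(-c) ≤ a := by
  induction a using WithBot.recBotCoe with
  | bot => simp [neg, h rfl]
  | coe r =>
    induction x using WithBot.recBotCoe with
    | bot => simp
    | coe s =>
      simp only [neg, WithBot.map_coe, ← WithBot.coe_add, toE_coe, EReal.coe_le_coe_iff,
        WithBot.coe_le_coe]
      constructor <;> intro <;> linarith

end Rmax

lemma EReal.eq_of_forall_le_coe_iff {a b : EReal} (h : ∀ c : ℝ, a ≤ c ↔ b ≤ c) : a = b :=
  le_antisymm (EReal.le_of_forall_lt_iff_le.mp fun c hc => (h c).mpr hc.le)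
    (EReal.le_of_forall_lt_iff_le.mp fun c hc => (h c).mp hc.le)

namespace MPConvexI

variable {ι : Type} {C : Set (ι → Rmax)}

lemma sup_mem (hC : MPConvexI C) {x y : ι → Rmax} (hx : x ∈ C) (hy : y ∈ C) : x ⊔ y ∈ C := by
  have h := hC x hx y hy 0 0 (max_self 0)
  simp only [zero_add] at h
  exact h

lemma exists_add_max_eq (hC : MPConvexI C) {v w : ι → Rmax} (hv : v ∈ C) (hw : w ∈ C)
    (a b : ℝ) : ∃ u ∈ C, ∀ i, u i + ↑(max a b) = max (v i + a) (w i + b) := by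
  refine ⟨fun i => max (↑(a - max a b) + v i) (↑(b - max a b) + w i), hC v hv w hw _ _ ?_,
    fun i => ?_⟩
  · rw [← WithBot.coe_max, max_sub_sub_right, sub_self, WithBot.coe_zero]
  · rw [← max_add_add_right, add_right_comm, add_right_comm _ (w i), ← WithBot.coe_add,
      ← WithBot.coe_add, sub_add_cancel, sub_add_cancel, add_comm (a : Rmax), add_comm (b : Rmax)]

end MPConvexI

lemma DirStable.sSup_inter_Iic_mem {ι : Type} {C : Set (ι → Rmax)} (hdir : DirStable C)
    (hconv : MPConvexI C) {b : ι → Rmax} (hne : (C ∩ Set.Iic b).Nonempty) :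
    sSup (C ∩ Set.Iic b) ∈ C :=
  hdir _ Set.inter_subset_left hne
    (fun x hx y hy => ⟨x ⊔ y, ⟨hconv.sup_mem hx.1 hy.1, Set.mem_Iic.2 (sup_le hx.2 hy.2)⟩,
      le_sup_left, le_sup_right⟩)
    ⟨b, fun _ hx => hx.2⟩

lemma FiltStable.mem_of_monotone_approx_above {ι : Type} {C : Set (ι → Rmax)}
    (hfilt : FiltStable C) {y : ι → Rmax} (p : ℝ → ι → Rmax)
    (hp : ∀ ε δ : ℝ, 0 < ε → ε ≤ δ → p ε ≤ p δ)
    (hpC : ∀ ε > 0, p ε ∈ C) (hyp : ∀ ε > 0, y ≤ p ε)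
    (hpy : ∀ ε > 0, p ε ≤ fun i => y i + ε) : y ∈ C := by
  have hdirected : DirectedOn (· ≥ ·) (p '' Set.Ioi 0) :=
    directedOn_image.2 fun ε hε δ hδ => ⟨min ε δ, Set.mem_Ioi.2 (lt_min hε hδ),
      hp _ _ (lt_min hε hδ) (min_le_left ε δ), hp _ _ (lt_min hε hδ) (min_le_right ε δ)⟩
  have hinf : sInf (p '' Set.Ioi 0) = y := by
    refine le_antisymm (fun i => Rmax.le_of_forall_pos_le_add_coe fun ε hε => ?_)
      (le_csInf (Set.nonempty_Ioi.image p) (Set.forall_mem_image.2 hyp))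
    exact (csInf_le (OrderBot.bddBelow _) (Set.mem_image_of_mem p hε) i).trans (hpy ε hε i)
  rw [← hinf]
  exact hfilt _ (Set.image_subset_iff.2 hpC) (Set.nonempty_Ioi.image p) hdirected

section AffineForm

variable {ι : Type}

def affineForm (w : ι → Rmax) (d : Rmax) (x : ι → Rmax) : EReal :=
  max (⨆ i, Rmax.toE (w i + x i)) (Rmax.toE d)

lemma affineForm_bot (d : Rmax) (x : ι → Rmax) : affineForm ⊥ d x = Rmax.toE d := by
  simp [affineForm]

lemma affineForm_update_bot [DecidableEq ι] (j : ι) (x : ι → Rmax) :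
    affineForm (Function.update ⊥ j 0) ⊥ x = Rmax.toE (x j) := by
  refine le_antisymm (max_le (iSup_le fun i => ?_) (by simp)) ?_
  · rcases eq_or_ne i j with rfl | hij <;> simp [*]
  · exact (le_iSup_of_le j (by simp)).trans (le_max_left _ _)

def Separates (C : Set (ι → Rmax)) (y : ι → Rmax) (f g : (ι → Rmax) → EReal) : Prop :=
  (∀ x ∈ C, f x = g x) ∧ f y ≠ g y

lemma separates_of_forall_eq_bot {C : Set (ι → Rmax)} {y : ι → Rmax} {f : (ι → Rmax) → EReal}
    (hC : ∀ x ∈ C, f x = ⊥) (hy : f y ≠ ⊥) : Separates C y f (affineForm ⊥ ⊥) := by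
  simp only [Separates, affineForm_bot, Rmax.toE_bot]
  exact ⟨hC, hy⟩

def residualForm (a : ι → Rmax) (m : ℝ) : (ι → Rmax) → EReal :=
  affineForm (fun i => Rmax.neg (a i)) ↑(-m)

lemma residualForm_le_coe_iff {a x : ι → Rmax} {m c : ℝ} (h : ∀ i, a i = ⊥ → x i = ⊥) :
    residualForm a m x ≤ c ↔ -c ≤ m ∧ ∀ i, x i + ↑(-c) ≤ a i := by
  simp only [residualForm, affineForm, max_le_iff, iSup_le_iff,
    Rmax.toE_neg_add_le_coe_iff (h _), Rmax.toE_coe, EReal.coe_le_coe_iff, neg_le]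
  exact and_comm

end AffineForm

section Projection

variable {ι : Type} (C : Set (ι → Rmax)) (y : ι → Rmax)

def scalings : Set ℝ := {l | l ≤ 0 ∧ ∃ v ∈ C, ∀ i, v i + l ≤ y i}

def scaledBelow : Set (ι → Rmax) :=
  {u | u ≤ y ∧ ∃ v ∈ C, ∃ l : ℝ, l ≤ 0 ∧ u = fun i => v i + l}

variable {C y}

lemma sSup_scalings_nonpos : sSup (scalings C y) ≤ 0 :=
  Real.sSup_nonpos fun _ hl => hl.1

lemma le_sSup_scalings {l : ℝ} (hl : l ∈ scalings C y) : l ≤ sSup (scalings C y) :=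
  le_csSup ⟨0, fun _ hl => hl.1⟩ hl

lemma scaledBelow_bddAbove : BddAbove (scaledBelow C y) := ⟨y, fun _ hu => hu.1⟩

lemma add_le_sSup_scaledBelow {v : ι → Rmax} (hv : v ∈ C) {l : ℝ} (hl : l ≤ 0)
    (hvl : ∀ i, v i + l ≤ y i) (i : ι) : v i + l ≤ sSup (scaledBelow C y) i :=
  le_csSup scaledBelow_bddAbove (show (fun i => v i + l) ∈ scaledBelow C y from
    ⟨hvl, v, hv, l, hl, rfl⟩) i

lemma sSup_scaledBelow_le (hne : (scaledBelow C y).Nonempty) : sSup (scaledBelow C y) ≤ y :=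
  csSup_le hne fun _ hu => hu.1

lemma exists_nonpos_add_le (harch : ∀ v ∈ C, ∃ lam : ℝ, ∀ i, v i + (lam : Rmax) ≤ y i)
    {v : ι → Rmax} (hv : v ∈ C) : ∃ l : ℝ, l ≤ 0 ∧ ∀ i, v i + l ≤ y i := by
  obtain ⟨lam, hlam⟩ := harch v hv
  exact ⟨min lam 0, min_le_right _ _,
    fun i => (add_le_add_right (WithBot.coe_le_coe.2 (min_le_left _ _)) _).trans (hlam i)⟩

lemma eq_bot_of_archimedean (harch : ∀ v ∈ C, ∃ lam : ℝ, ∀ i, v i + (lam : Rmax) ≤ y i)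
    {x : ι → Rmax} (hx : x ∈ C) {i : ι} (hyi : y i = ⊥) : x i = ⊥ := by
  obtain ⟨lam, hlam⟩ := harch x hx
  simpa [hyi] using hlam i

lemma eq_bot_of_sSup_scaledBelow_eq_bot
    (harch : ∀ v ∈ C, ∃ lam : ℝ, ∀ i, v i + (lam : Rmax) ≤ y i)
    (hfin : ∀ i, y i ≠ ⊥ → ∃ v ∈ C, v i ≠ ⊥) {i : ι}
    (hi : sSup (scaledBelow C y) i = ⊥) : y i = ⊥ := by
  by_contra hyi
  obtain ⟨v, hv, hvi⟩ := hfin i hyi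
  obtain ⟨l, hl, hvl⟩ := exists_nonpos_add_le harch hv
  refine hvi ?_
  simpa [hi] using add_le_sSup_scaledBelow hv hl hvl i

lemma add_le_iff_add_le_sSup_scaledBelow
    (harch : ∀ v ∈ C, ∃ lam : ℝ, ∀ i, v i + (lam : Rmax) ≤ y i)
    {x : ι → Rmax} (hx : x ∈ C) (l : ℝ) :
    (l ≤ 0 ∧ ∀ i, x i + l ≤ y i) ↔
      (l ≤ sSup (scalings C y) ∧ ∀ i, x i + l ≤ sSup (scaledBelow C y) i) := by
  refine ⟨fun ⟨hl, hxl⟩ =>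
      ⟨le_sSup_scalings ⟨hl, x, hx, hxl⟩, add_le_sSup_scaledBelow hx hl hxl⟩,
    fun ⟨hl, hxl⟩ => ⟨hl.trans sSup_scalings_nonpos, fun i => (hxl i).trans ?_⟩⟩
  obtain ⟨l₀, hl₀, hxl₀⟩ := exists_nonpos_add_le harch hx
  exact sSup_scaledBelow_le ⟨_, hxl₀, x, hx, l₀, hl₀, rfl⟩ i

end Projection

section Separation

variable {ι : Type} {C : Set (ι → Rmax)} {y : ι → Rmax}

lemma exists_mem_ge_of_mem_scaledBelow (hconv : MPConvexI C) {l₁ : ℝ} (hl₁ : l₁ ∈ scalings C y)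
    {u : ι → Rmax} (hu : u ∈ scaledBelow C y) :
    ∃ w ∈ C, u ≤ w ∧ ∀ i, w i ≤ y i + ↑(-l₁) := by
  obtain ⟨hl₁0, v₁, hv₁, hv₁y⟩ := hl₁
  obtain ⟨huy, v, hv, l, hl0, rfl⟩ := hu
  obtain ⟨w, hw, hwmax⟩ := hconv.exists_add_max_eq hv hv₁ l l₁
  refine ⟨w, hw, fun i => ?_, fun i => ?_⟩
  · calc v i + l ≤ w i + ↑(max l l₁) := (hwmax i).symm ▸ le_max_left _ _
      _ ≤ w i + ↑(0 : ℝ) := add_le_add_right (WithBot.coe_le_coe.2 (max_le hl0 hl₁0)) _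
      _ = w i := by simp
  · have hwy : w i + ↑(max l l₁) ≤ y i := (hwmax i).trans_le (max_le (huy i) (hv₁y i))
    exact (Rmax.add_coe_le_iff.1 hwy).trans
      (add_le_add_right (WithBot.coe_le_coe.2 (neg_le_neg (le_max_right _ _))) _)

theorem mem_of_le_sSup_scaledBelow (hconv : MPConvexI C) (hdir : DirStable C)
    (hfilt : FiltStable C) (hne : (scalings C y).Nonempty) (hμ : sSup (scalings C y) = 0)
    (hyz : y ≤ sSup (scaledBelow C y)) : y ∈ C := by
  set E : ℝ → Set (ι → Rmax) := fun ε => C ∩ Set.Iic fun i => y i + ε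
  have hE_bdd : ∀ ε, BddAbove (E ε) := fun ε => ⟨_, fun _ hv => hv.2⟩
  have hcover : ∀ ε > 0, ∀ u ∈ scaledBelow C y, ∃ w ∈ E ε, u ≤ w := by
    intro ε hε u hu
    obtain ⟨l₁, hl₁, hl₁ε⟩ := exists_lt_of_lt_csSup hne (hμ ▸ neg_lt_zero.2 hε)
    obtain ⟨w, hw, huw, hwy⟩ := exists_mem_ge_of_mem_scaledBelow hconv hl₁ hu
    exact ⟨w, ⟨hw, fun i => (hwy i).trans
      (add_le_add_right (WithBot.coe_le_coe.2 (neg_lt_of_neg_lt hl₁ε).le) _)⟩, huw⟩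
  obtain ⟨l₀, hl₀, v₀, hv₀, hv₀y⟩ := hne
  have hbelow_ne : (scaledBelow C y).Nonempty := ⟨_, hv₀y, v₀, hv₀, l₀, hl₀, rfl⟩
  have hE_ne : ∀ ε > 0, (E ε).Nonempty := fun ε hε =>
    (hcover ε hε _ hbelow_ne.some_mem).imp fun _ => And.left
  refine hfilt.mem_of_monotone_approx_above (fun ε => sSup (E ε)) (fun ε δ hε hεδ => ?_)
    (fun ε hε => hdir.sSup_inter_Iic_mem hconv (hE_ne ε hε)) (fun ε hε => ?_)
    (fun ε hε => csSup_le (hE_ne ε hε) fun _ hv => hv.2)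
  · refine csSup_le_csSup (hE_bdd δ) (hE_ne ε hε) (Set.inter_subset_inter_right _ ?_)
    exact Set.Iic_subset_Iic.2 fun i => add_le_add_right (WithBot.coe_le_coe.2 hεδ) _
  · refine hyz.trans (csSup_le hbelow_ne fun u hu => ?_)
    obtain ⟨w, hw, huw⟩ := hcover ε hε u hu
    exact huw.trans (le_csSup (hE_bdd ε) hw)

lemma residualForm_eq_of_mem (harch : ∀ v ∈ C, ∃ lam : ℝ, ∀ i, v i + (lam : Rmax) ≤ y i)
    (hfin : ∀ i, y i ≠ ⊥ → ∃ v ∈ C, v i ≠ ⊥) {x : ι → Rmax} (hx : x ∈ C) :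
    residualForm y 0 x = residualForm (sSup (scaledBelow C y)) (sSup (scalings C y)) x := by
  have hxy : ∀ i, y i = ⊥ → x i = ⊥ := fun i => eq_bot_of_archimedean harch hx
  refine EReal.eq_of_forall_le_coe_iff fun c => ?_
  rw [residualForm_le_coe_iff hxy,
    residualForm_le_coe_iff fun i hi => hxy i (eq_bot_of_sSup_scaledBelow_eq_bot harch hfin hi)]
  exact add_le_iff_add_le_sSup_scaledBelow harch hx (-c)

theorem separates_residualForm (hconv : MPConvexI C) (hdir : DirStable C) (hfilt : FiltStable C)
    (hy : y ∉ C) (harch : ∀ v ∈ C, ∃ lam : ℝ, ∀ i, v i + (lam : Rmax) ≤ y i)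
    (hCne : C.Nonempty) (hfin : ∀ i, y i ≠ ⊥ → ∃ v ∈ C, v i ≠ ⊥) :
    Separates C y (residualForm y 0)
      (residualForm (sSup (scaledBelow C y)) (sSup (scalings C y))) := by
  refine ⟨fun x hx => residualForm_eq_of_mem harch hfin hx, fun heq => hy ?_⟩
  have hy0 : residualForm y 0 y ≤ (0 : ℝ) :=
    (residualForm_le_coe_iff fun _ => id).2 ⟨by simp, fun i => by simp⟩
  obtain ⟨hμ, hyz⟩ := (residualForm_le_coe_iff fun _ hi =>
    eq_bot_of_sSup_scaledBelow_eq_bot harch hfin hi).1 (heq ▸ hy0)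
  obtain ⟨v, hv⟩ := hCne
  obtain ⟨l, hl, hvl⟩ := exists_nonpos_add_le harch hv
  exact mem_of_le_sSup_scaledBelow hconv hdir hfilt ⟨l, hl, v, hv, hvl⟩
    (le_antisymm sSup_scalings_nonpos (by simpa using hμ)) fun i => by simpa using hyz i

end Separation

/-- **Separation of a point from an order-closed max-plus convex subset of
`ℝmax^ι`, under an Archimedean assumption, by a max-plus affine hyperplane.** -/
theorem stmt9 {ι : Type} (C : Set (ι → Rmax)) (hconv : MPConvexI C)
    (hdir : DirStable C) (hfilt : FiltStable C)
    (y : ι → Rmax) (hy : y ∉ C)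
    (harch : ∀ v ∈ C, ∃ lam : ℝ, ∀ i, v i + (lam : Rmax) ≤ y i) :
    ∃ (w' w'' : ι → Rmax) (d' d'' : Rmax),
      (∀ x ∈ C,
        max (⨆ i, Rmax.toE (w' i + x i)) (Rmax.toE d') =
          max (⨆ i, Rmax.toE (w'' i + x i)) (Rmax.toE d'')) ∧
      max (⨆ i, Rmax.toE (w' i + y i)) (Rmax.toE d') ≠
        max (⨆ i, Rmax.toE (w'' i + y i)) (Rmax.toE d'') := by
  classical
  suffices ∃ w' d' w'' d'', Separates C y (affineForm w' d') (affineForm w'' d'') by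
    obtain ⟨w', d', w'', d'', h⟩ := this
    exact ⟨w', w'', d', d'', h⟩
  by_cases hfin : ∀ i, y i ≠ ⊥ → ∃ v ∈ C, v i ≠ ⊥
  · rcases C.eq_empty_or_nonempty with rfl | hCne
    · exact ⟨⊥, 0, ⊥, ⊥, separates_of_forall_eq_bot (by simp) (by simp [affineForm_bot])⟩
    · exact ⟨_, _, _, _, separates_residualForm hconv hdir hfilt hy harch hCne hfin⟩
  · push Not at hfin
    obtain ⟨j, hyj, hCj⟩ := hfin
    refine ⟨Function.update ⊥ j 0, ⊥, ⊥, ⊥, separates_of_forall_eq_bot (fun x hx => ?_) ?_⟩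
    · simp [affineForm_update_bot, hCj x hx]
    · simpa [affineForm_update_bot] using hyj
end
end

section
/- Let C ⊆ ℝmax^n be a max-plus convex set closed in the product topology of ℝmax^n, and define V_C ⊆ ℝmax^{n+1} as the set of all vectors (x_1 + λ, …, x_n + λ, λ) with x ∈ C and λ ∈ ℝmax. Then the closure of V_C in the product topology of ℝmax^{n+1} is contained in the union of V_C and the set of vectors whose last coordinate equals -∞. -/
noncomputable section

/-- the homogenization `V_C ⊆ ℝmax^{n+1}` of a set `C ⊆ ℝmax^n`:
all vectors `(x_1 + λ, …, x_n + λ, λ)` with `x ∈ C` and `λ ∈ ℝmax`. -/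
def VC {n : ℕ} (C : Set (Fin n → Rmax)) : Set (Fin (n + 1) → Rmax) :=
  {p | ∃ x ∈ C, ∃ lam : Rmax, p = Fin.snoc (fun i => x i + lam) lam}

open Filter Topology Set

lemma Rmax.toE_bot_s14 : Rmax.toE ⊥ = ⊥ := rfl
lemma Rmax.toE_coe_s14 (r : ℝ) : Rmax.toE (r : ℝ) = (r : EReal) := rfl

lemma Rmax.toE_strictMono_s14 : StrictMono Rmax.toE := by
  intro a b h
  induction a using WithBot.recBotCoe with
  | bot =>
    induction b using WithBot.recBotCoe with
    | bot => exact absurd h (lt_irrefl _)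
    | coe s => simpa [Rmax.toE_bot_s14, Rmax.toE_coe_s14] using EReal.bot_lt_coe s
  | coe r =>
    induction b using WithBot.recBotCoe with
    | bot => exact absurd h (by simp)
    | coe s =>
      have : r < s := by exact_mod_cast h
      simpa [Rmax.toE_coe_s14] using (EReal.coe_lt_coe_iff.mpr this)

lemma Rmax.toE_range : Set.range Rmax.toE = Set.Iio (⊤ : EReal) := by
  ext x
  constructor
  · rintro ⟨a, rfl⟩
    induction a using WithBot.recBotCoe with
    | bot => simp [Rmax.toE_bot_s14]
    | coe r => exact EReal.coe_lt_top r
  · intro hx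
    induction x using EReal.rec with
    | bot => exact ⟨⊥, rfl⟩
    | coe r => exact ⟨(r : ℝ), rfl⟩
    | top => exact absurd hx (by simp)

lemma Rmax.toE_isEmbedding : Topology.IsEmbedding Rmax.toE :=
  Rmax.toE_strictMono_s14.isEmbedding_of_ordConnected
    (by rw [Rmax.toE_range]; exact Set.ordConnected_Iio)

lemma Rmax.add_coe_neg (a : Rmax) (r : ℝ) : a + (r : ℝ) + ((-r : ℝ) : Rmax) = a := by
  induction a using WithBot.recBotCoe with
  | bot => simp
  | coe s =>
    rw [← WithBot.coe_add, ← WithBot.coe_add]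
    norm_num

lemma Rmax.toE_add_coe (a : Rmax) (r : ℝ) :
    Rmax.toE (a + (r : ℝ)) = Rmax.toE a + (r : EReal) := by
  induction a using WithBot.recBotCoe with
  | bot => simp [Rmax.toE_bot_s14]
  | coe s =>
    have : ((s : Rmax) + (r : ℝ)) = ((s + r : ℝ) : Rmax) := by push_cast; ring
    rw [this, Rmax.toE_coe_s14, Rmax.toE_coe_s14]
    push_cast; ring

/-- **For a closed max-plus convex set `C ⊆ ℝmax^n`, the closure of its
homogenization `V_C` is contained in the union of `V_C` and the set of vectors
whose last coordinate is `-∞`.** -/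
theorem stmt14 {n : ℕ} (C : Set (Fin n → Rmax)) (hconv : MPConvex C)
    (hclosed : IsClosed C) :
    closure (VC C) ⊆ VC C ∪ {p : Fin (n + 1) → Rmax | p (Fin.last n) = ⊥} := by
  intro p hp
  by_cases hlast : p (Fin.last n) = ⊥
  · exact Or.inr hlast
  left
  obtain ⟨c, hc⟩ : ∃ c : ℝ, p (Fin.last n) = (c : ℝ) := by
    refine ⟨(p (Fin.last n)).unbot hlast, ?_⟩
    simp
  have hne : (𝓝 p ⊓ 𝓟 (VC C)).NeBot := (mem_closure_iff_clusterPt.mp hp)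
  set l := 𝓝 p ⊓ 𝓟 (VC C) with hl
  -- eventually the last coordinate is above ⊥
  have hev_bot : ∀ᶠ q in l, (⊥ : Rmax) < q (Fin.last n) := by
    have h1 : ∀ᶠ q in 𝓝 p, (⊥ : Rmax) < q (Fin.last n) := by
      have hopen : IsOpen {q : Fin (n+1) → Rmax | (⊥ : Rmax) < q (Fin.last n)} :=
        isOpen_Ioi.preimage (continuous_apply (Fin.last n))
      exact hopen.mem_nhds (by simp [hc, WithBot.bot_lt_coe])
    exact h1.filter_mono inf_le_left
  have hev_vc : ∀ᶠ q in l, q ∈ VC C := eventually_inf_principal.mpr (Eventually.of_forall fun q h => h)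
  -- the "dehomogenization" map
  set F : (Fin (n+1) → Rmax) → Fin n → Rmax :=
    fun q i => q i.castSucc + WithBot.map (fun r : ℝ => -r) (q (Fin.last n)) with hF
  -- eventually F q ∈ C
  have hevC : ∀ᶠ q in l, F q ∈ C := by
    filter_upwards [hev_bot, hev_vc] with q hb hvc
    obtain ⟨y, hy, m, rfl⟩ := hvc
    rw [Fin.snoc_last] at hb
    obtain ⟨r, rfl⟩ : ∃ r : ℝ, m = (r : ℝ) := by
      obtain ⟨r, hr⟩ := WithBot.ne_bot_iff_exists.mp hb.ne'
      exact ⟨r, hr.symm⟩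
    have : F (Fin.snoc (fun i => y i + (r : ℝ)) (r : ℝ)) = y := by
      funext i
      simp only [hF, Fin.snoc_castSucc, Fin.snoc_last, WithBot.map_coe]
      exact Rmax.add_coe_neg (y i) r
    rw [this]; exact hy
  -- F tends to F p along l
  have htend : Tendsto F l (𝓝 (F p)) := by
    rw [tendsto_pi_nhds]
    intro i
    rw [Rmax.toE_isEmbedding.tendsto_nhds_iff]
    -- the EReal-valued version
    have hGt : Tendsto (fun q : Fin (n+1) → Rmax =>
        Rmax.toE (q i.castSucc) + (- Rmax.toE (q (Fin.last n)))) l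
        (𝓝 (Rmax.toE (p i.castSucc) + (- Rmax.toE (p (Fin.last n))))) := by
      have h1 : Tendsto (fun q : Fin (n+1) → Rmax => Rmax.toE (q i.castSucc)) l
          (𝓝 (Rmax.toE (p i.castSucc))) :=
        ((Rmax.toE_isEmbedding.continuous.comp (continuous_apply i.castSucc)).tendsto p).mono_left
          inf_le_left
      have h2 : Tendsto (fun q : Fin (n+1) → Rmax => - Rmax.toE (q (Fin.last n))) l
          (𝓝 (- Rmax.toE (p (Fin.last n)))) :=
        (((continuous_neg : Continuous (fun x : EReal => -x)).comp
          (Rmax.toE_isEmbedding.continuous.comp (continuous_apply (Fin.last n)))).tendsto p).mono_left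
          inf_le_left
      have hadd : ContinuousAt (fun z : EReal × EReal => z.1 + z.2)
          (Rmax.toE (p i.castSucc), - Rmax.toE (p (Fin.last n))) := by
        apply EReal.continuousAt_add
        · right
          rw [hc, Rmax.toE_coe_s14]
          simp [EReal.neg_eq_bot_iff]
        · right
          rw [hc, Rmax.toE_coe_s14]
          simp [EReal.neg_eq_top_iff]
      exact hadd.tendsto.comp (h1.prodMk_nhds h2)
    have heq : ∀ᶠ q in l, Rmax.toE (F q i)
        = Rmax.toE (q i.castSucc) + (- Rmax.toE (q (Fin.last n))) := by
      filter_upwards [hev_bot] with q hb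
      obtain ⟨r, hr⟩ : ∃ r : ℝ, q (Fin.last n) = (r : ℝ) := by
        obtain ⟨r, hr⟩ := WithBot.ne_bot_iff_exists.mp hb.ne'
        exact ⟨r, hr.symm⟩
      simp only [hF, hr, WithBot.map_coe, Rmax.toE_add_coe, Rmax.toE_coe_s14]
      norm_cast
    have hval : Rmax.toE (F p i)
        = Rmax.toE (p i.castSucc) + (- Rmax.toE (p (Fin.last n))) := by
      simp only [hF, hc, WithBot.map_coe, Rmax.toE_add_coe, Rmax.toE_coe_s14]
      norm_cast
    rw [show (Rmax.toE ∘ fun q => F q i) = fun q => Rmax.toE (F q i) from rfl, hval]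
    exact hGt.congr' (heq.mono fun q h => h.symm)
  have hxC : F p ∈ C := by
    have := mem_closure_of_tendsto htend hevC
    rwa [hclosed.closure_eq] at this
  refine ⟨F p, hxC, (c : ℝ), ?_⟩
  funext j
  induction j using Fin.lastCases with
  | last => rw [Fin.snoc_last, hc]
  | cast i =>
    rw [Fin.snoc_castSucc]
    simp only [hF, hc, WithBot.map_coe]
    have h := Rmax.add_coe_neg (p i.castSucc) (-c)
    rw [neg_neg] at h
    exact h.symm

end
end
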